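/- Let W = (W₁,…,W_k) be a random vector with nonnegative coordinates, mean μ ≻ 0, standard deviations σ ≻ 0, and suppose ‖W − W^i‖₂ ≤ K for each direction-i size biased vector W^i, i = 1,…,k. Let σ_(1) = min_i σ_i, K₁ = (2K/σ_(1)) ‖μ/σ‖₂, K₂ = K/(2σ_(1)), where μ/σ denotes coordinatewise division. Then for every t ∈ ℝ^k with t ⪰ 0, P((W − μ)/σ ⪰ t) ≤ exp(−‖t‖₂² / (2(K₁ + K₂‖t‖₂))). -/

import Mathlib

/-!
Put `u = t/σ`, `Y = u ⬝ W`, `A = u ⬝ μ` and `B = K‖u‖`. For each `i`, the size bias identity and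
`‖W - W^i‖ ≤ K` give `E[W_i e^{rY}] = μ_i E[e^{r u ⬝ W^i}] ≤ μ_i e^{rB} E[e^{rY}]`, so the moment
generating function `m` of `Y` satisfies `m' ≤ A e^{rB} m` for `r ≥ 0`, whence
`m(s) ≤ exp(A (e^{sB} - 1) / B)`. The event `(W - μ)/σ ⪰ t` forces `Y ≥ A + a` with `a = ‖t‖²`;
the Chernoff bound at `s = a / (AB + Ba/3)` together with `(e^x - 1 - x)(1 - x/3) ≤ x²/2` gives the
Bernstein-type tail `exp(-a² / (2(AB + Ba/3)))`. Finally `A ≤ ‖t‖ ‖μ/σ‖` by Cauchy–Schwarz and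
`‖u‖ ≤ ‖t‖ / σ_(1)`.
-/

open MeasureTheory Matrix

/-- The Euclidean (ℓ²) norm on `Fin k → ℝ`. -/
noncomputable def norm2 {k : ℕ} (x : Fin k → ℝ) : ℝ := Real.sqrt (∑ i, x i ^ 2)

open ProbabilityTheory Real

lemma monotoneOn_Ici_of_hasDerivAt_nonneg {f f' : ℝ → ℝ} {a : ℝ}
    (hf : ∀ x, HasDerivAt f (f' x) x) (hf' : ∀ x, a < x → 0 ≤ f' x) :
    MonotoneOn f (Set.Ici a) :=
  monotoneOn_of_hasDerivWithinAt_nonneg (convex_Ici a)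
    (fun x _ => (hf x).continuousAt.continuousWithinAt) (fun x _ => (hf x).hasDerivWithinAt)
    (fun x hx => hf' x (by simpa using hx))

lemma exp_sub_one_mul_two_sub_le {x : ℝ} (hx : 0 ≤ x) : (exp x - 1) * (2 - x) ≤ 2 * x := by
  have hderiv : ∀ y, HasDerivAt (fun y => 2 * y - (exp y - 1) * (2 - y))
      (1 - (1 - y) * exp y) y := fun y => by
    refine (((hasDerivAt_id' y).const_mul 2).fun_sub
      (((hasDerivAt_exp y).sub_const 1).fun_mul ((hasDerivAt_id' y).const_sub 2))).congr_deriv ?_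
    ring
  have hmono := monotoneOn_Ici_of_hasDerivAt_nonneg (a := 0) hderiv fun y _ => by
    have := mul_le_mul_of_nonneg_right (one_sub_le_exp_neg y) (exp_pos y).le
    rw [← exp_add, neg_add_cancel, exp_zero] at this
    linarith
  simpa using hmono Set.self_mem_Ici (Set.mem_Ici.2 hx) hx

lemma exp_sub_one_sub_mul_one_sub_div_three_le {x : ℝ} (hx : 0 ≤ x) :
    (exp x - 1 - x) * (1 - x / 3) ≤ x ^ 2 / 2 := by
  have hderiv : ∀ y, HasDerivAt (fun y => y ^ 2 / 2 - (exp y - 1 - y) * (1 - y / 3))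
      ((2 * y - (exp y - 1) * (2 - y)) / 3) y := fun y => by
    refine (((hasDerivAt_pow 2 y).div_const 2).fun_sub
      ((((hasDerivAt_exp y).sub_const 1).fun_sub (hasDerivAt_id' y)).fun_mul
        (((hasDerivAt_id' y).div_const 3).const_sub 1))).congr_deriv ?_
    ring
  have hmono := monotoneOn_Ici_of_hasDerivAt_nonneg (a := 0) hderiv fun y hy =>
    div_nonneg (sub_nonneg.2 (exp_sub_one_mul_two_sub_le hy.le)) (by norm_num)
  simpa using hmono Set.self_mem_Ici (Set.mem_Ici.2 hx) hx

lemma le_mul_exp_sub_of_hasDerivAt_le_mul {f f' g g' : ℝ → ℝ}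
    (hf : ∀ x, HasDerivAt f (f' x) x) (hg : ∀ x, HasDerivAt g (g' x) x)
    (hfg : ∀ x, 0 < x → f' x ≤ g' x * f x) {x : ℝ} (hx : 0 ≤ x) :
    f x ≤ f 0 * exp (g x - g 0) := by
  have hderiv : ∀ y, HasDerivAt (fun y => -(f y * exp (-g y)))
      ((g' y * f y - f' y) * exp (-g y)) y := fun y => by
    refine ((hf y).fun_mul (hg y).fun_neg.exp).fun_neg.congr_deriv ?_
    ring
  have hmono := monotoneOn_Ici_of_hasDerivAt_nonneg (a := 0) hderiv fun y hy =>
    mul_nonneg (sub_nonneg.2 (hfg y hy)) (exp_pos _).le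
  have h := hmono Set.self_mem_Ici (Set.mem_Ici.2 hx) hx
  simp only [neg_le_neg_iff] at h
  calc f x = f x * exp (-g x) * exp (g x) := by rw [mul_assoc, ← exp_add]; simp
    _ ≤ f 0 * exp (-g 0) * exp (g x) := by gcongr
    _ = f 0 * exp (g x - g 0) := by rw [mul_assoc, ← exp_add]; ring_nf

noncomputable def bernsteinRate (A B a : ℝ) : ℝ := a ^ 2 / (2 * (A * B + B * a / 3))

lemma exponent_le_neg_bernsteinRate {A B a : ℝ} (hA : 0 < A) (hB : 0 < B) (ha : 0 ≤ a) :
    A * (exp (a / (A * B + B * a / 3) * B) - 1) / B - a / (A * B + B * a / 3) * (A + a)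
      ≤ -bernsteinRate A B a := by
  set d := A * B + B * a / 3 with hd
  have hd_pos : 0 < d := by positivity
  set x := a / d * B with hx
  have htaylor := exp_sub_one_sub_mul_one_sub_div_three_le (x := x) (by positivity)
  have hfactor : 1 - x / 3 = A * B / d := by rw [hx, hd]; field_simp; ring
  rw [hfactor] at htaylor
  have hquad : A * (exp x - 1 - x) / B ≤ a ^ 2 / (2 * d) :=
    calc A * (exp x - 1 - x) / B = (exp x - 1 - x) * (A * B / d) * (d / B ^ 2) := by
          field_simp
      _ ≤ x ^ 2 / 2 * (d / B ^ 2) := by gcongr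
      _ = a ^ 2 / (2 * d) := by rw [hx]; field_simp
  have hsplit : A * (exp x - 1) / B - a / d * (A + a) = A * (exp x - 1 - x) / B - a ^ 2 / d := by
    rw [hx]; field_simp; ring
  have hhalf : a ^ 2 / d = 2 * (a ^ 2 / (2 * d)) := by field_simp
  rw [bernsteinRate, hsplit]
  linarith

lemma div_le_bernsteinRate {A B T K₁ K₂ : ℝ} (hA : 0 ≤ A) (hB : 0 < B) (hT : 0 < T)
    (hAB : A * B ≤ K₁ * T ^ 2 / 2) (hBT : B ≤ 2 * K₂ * T) :
    T ^ 2 / (2 * (K₁ + K₂ * T)) ≤ bernsteinRate A B (T ^ 2) := by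
  have hK₁ : 0 ≤ K₁ :=
    nonneg_of_mul_nonneg_left (by nlinarith [mul_nonneg hA hB.le] : 0 ≤ K₁ * T ^ 2) (by positivity)
  have hK₂ : 0 < K₂ := by nlinarith
  have hd : A * B + B * T ^ 2 / 3 ≤ T ^ 2 * (K₁ + K₂ * T) := by nlinarith
  rw [bernsteinRate, div_le_div_iff₀ (by positivity) (by positivity)]
  nlinarith [mul_le_mul_of_nonneg_left hd (sq_nonneg T)]

lemma norm2_nonneg {k : ℕ} (x : Fin k → ℝ) : 0 ≤ norm2 x := Real.sqrt_nonneg _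

lemma sq_norm2 {k : ℕ} (x : Fin k → ℝ) : norm2 x ^ 2 = ∑ i, x i ^ 2 :=
  Real.sq_sqrt (by positivity)

lemma norm2_pos_iff {k : ℕ} {x : Fin k → ℝ} : 0 < norm2 x ↔ ∃ i, x i ≠ 0 := by
  simp [norm2, Finset.sum_pos_iff_of_nonneg, sq_nonneg, sq_pos_iff]

lemma dotProduct_le_norm2_mul_norm2 {k : ℕ} (x y : Fin k → ℝ) : x ⬝ᵥ y ≤ norm2 x * norm2 y :=
  Real.sum_mul_le_sqrt_mul_sqrt _ x y

lemma dotProduct_le_dotProduct_add_norm2_mul {k : ℕ} (u x y : Fin k → ℝ) :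
    u ⬝ᵥ y ≤ u ⬝ᵥ x + norm2 u * norm2 (x - y) := by
  have h := dotProduct_le_norm2_mul_norm2 u (y - x)
  rw [dotProduct_sub, ← neg_sub x y] at h
  have hneg : norm2 (-(x - y)) = norm2 (x - y) := by simp only [norm2, Pi.neg_apply, neg_sq]
  linarith [hneg ▸ h]

lemma norm2_div_le {k : ℕ} {x c : Fin k → ℝ} {m : ℝ} (hm : 0 < m) (hc : ∀ i, m ≤ c i) :
    norm2 (fun i => x i / c i) ≤ norm2 x / m := by
  rw [norm2, norm2, ← Real.sqrt_sq hm.le, ← Real.sqrt_div' _ (sq_nonneg m), Finset.sum_div]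
  gcongr with i
  rw [div_pow]
  gcongr
  exact hc i

lemma dotProduct_add_sq_norm2_le {k : ℕ} {t σ m w : Fin k → ℝ} (ht : ∀ i, 0 ≤ t i)
    (hσ : ∀ i, 0 < σ i) (h : ∀ i, t i ≤ (w i - m i) / σ i) :
    (fun i => t i / σ i) ⬝ᵥ m + norm2 t ^ 2 ≤ (fun i => t i / σ i) ⬝ᵥ w := by
  rw [sq_norm2, dotProduct, dotProduct, ← Finset.sum_add_distrib]
  gcongr with i
  calc t i / σ i * m i + t i ^ 2 = t i / σ i * (m i + σ i * t i) := by
        field_simp [(hσ i).ne']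
    _ ≤ t i / σ i * w i := by
        refine mul_le_mul_of_nonneg_left ?_ (div_nonneg (ht i) (hσ i).le)
        linarith [(le_div_iff₀' (hσ i)).1 (h i)]

section SizeBias

variable {Ω : Type*} [MeasurableSpace Ω] {μ : Measure Ω} {k : ℕ} {W : Ω → Fin k → ℝ}

def IsSizeBiasedIn (μ : Measure Ω) (W : Ω → Fin k → ℝ) (i : Fin k) (m : ℝ)
    (V : Ω → Fin k → ℝ) : Prop :=
  ∀ f : (Fin k → ℝ) → ℝ, Integrable (fun ω => W ω i * f (W ω)) μ →
    Integrable (fun ω => f (V ω)) μ → ∫ ω, W ω i * f (W ω) ∂μ = m * ∫ ω, f (V ω) ∂μ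

lemma integral_mul_exp_dotProduct_le {i : Fin k} {m K r : ℝ} {V : Ω → Fin k → ℝ}
    (hV : IsSizeBiasedIn μ W i m V) (hm : 0 ≤ m)
    (hWV : ∀ᵐ ω ∂μ, norm2 (fun j => W ω j - V ω j) ≤ K) (u : Fin k → ℝ) (hr : 0 ≤ r)
    (hW_int : Integrable (fun ω => exp (r * (u ⬝ᵥ W ω))) μ)
    (hV_int : Integrable (fun ω => exp (r * (u ⬝ᵥ V ω))) μ)
    (hWi_int : Integrable (fun ω => W ω i * exp (r * (u ⬝ᵥ W ω))) μ) :
    ∫ ω, W ω i * exp (r * (u ⬝ᵥ W ω)) ∂μ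
      ≤ m * (exp (r * (K * norm2 u)) * mgf (fun ω => u ⬝ᵥ W ω) μ r) := by
  rw [hV (fun x => exp (r * (u ⬝ᵥ x))) hWi_int hV_int]
  refine mul_le_mul_of_nonneg_left ?_ hm
  have hcoupling : ∀ᵐ ω ∂μ,
      exp (r * (u ⬝ᵥ V ω)) ≤ exp (r * (K * norm2 u)) * exp (r * (u ⬝ᵥ W ω)) := by
    filter_upwards [hWV] with ω hω
    rw [← exp_add, ← mul_add]
    gcongr
    calc u ⬝ᵥ V ω ≤ u ⬝ᵥ W ω + norm2 u * norm2 (fun j => W ω j - V ω j) :=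
          dotProduct_le_dotProduct_add_norm2_mul _ _ _
      _ ≤ K * norm2 u + u ⬝ᵥ W ω := by
          nlinarith [mul_le_mul_of_nonneg_left hω (norm2_nonneg u)]
  calc ∫ ω, exp (r * (u ⬝ᵥ V ω)) ∂μ
      ≤ ∫ ω, exp (r * (K * norm2 u)) * exp (r * (u ⬝ᵥ W ω)) ∂μ :=
        integral_mono_ae hV_int (hW_int.const_mul _) hcoupling
    _ = exp (r * (K * norm2 u)) * mgf (fun ω => u ⬝ᵥ W ω) μ r := integral_const_mul _ _

lemma integral_dotProduct_mul_exp_le {μv : Fin k → ℝ} {Ws : Fin k → Ω → Fin k → ℝ} {K r : ℝ}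
    (hsb : ∀ i, IsSizeBiasedIn μ W i (μv i) (Ws i)) (hμv : ∀ i, 0 ≤ μv i)
    (hK : ∀ i, ∀ᵐ ω ∂μ, norm2 (fun j => W ω j - Ws i ω j) ≤ K)
    {u : Fin k → ℝ} (hu : ∀ i, 0 ≤ u i) (hr : 0 ≤ r)
    (hW_int : Integrable (fun ω => exp (r * (u ⬝ᵥ W ω))) μ)
    (hWs_int : ∀ i, Integrable (fun ω => exp (r * (u ⬝ᵥ Ws i ω))) μ)
    (hWi_int : ∀ i, Integrable (fun ω => W ω i * exp (r * (u ⬝ᵥ W ω))) μ) :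
    ∫ ω, (u ⬝ᵥ W ω) * exp (r * (u ⬝ᵥ W ω)) ∂μ
      ≤ (u ⬝ᵥ μv) * exp (r * (K * norm2 u)) * mgf (fun ω => u ⬝ᵥ W ω) μ r := by
  have hexpand : (fun ω => (u ⬝ᵥ W ω) * exp (r * (u ⬝ᵥ W ω)))
      = fun ω => ∑ i, u i * (W ω i * exp (r * (u ⬝ᵥ W ω))) := by
    funext ω
    show (∑ i, u i * W ω i) * _ = _
    simp only [Finset.sum_mul, mul_assoc]
  calc ∫ ω, (u ⬝ᵥ W ω) * exp (r * (u ⬝ᵥ W ω)) ∂μ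
      = ∑ i, u i * ∫ ω, W ω i * exp (r * (u ⬝ᵥ W ω)) ∂μ := by
        rw [hexpand, integral_finsetSum _ fun i _ => (hWi_int i).const_mul (u i)]
        simp only [integral_const_mul]
    _ ≤ ∑ i, u i * (μv i * (exp (r * (K * norm2 u)) * mgf (fun ω => u ⬝ᵥ W ω) μ r)) := by
        gcongr with i
        exacts [hu i,
          integral_mul_exp_dotProduct_le (hsb i) (hμv i) (hK i) u hr hW_int (hWs_int i) (hWi_int i)]
    _ = (u ⬝ᵥ μv) * exp (r * (K * norm2 u)) * mgf (fun ω => u ⬝ᵥ W ω) μ r := by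
        simp only [dotProduct, Finset.sum_mul, mul_assoc]

lemma mgf_dotProduct_le [IsProbabilityMeasure μ] {μv : Fin k → ℝ}
    {Ws : Fin k → Ω → Fin k → ℝ} {K : ℝ}
    (hsb : ∀ i, IsSizeBiasedIn μ W i (μv i) (Ws i)) (hμv : ∀ i, 0 ≤ μv i)
    (hK : ∀ i, ∀ᵐ ω ∂μ, norm2 (fun j => W ω j - Ws i ω j) ≤ K)
    (hW_int : ∀ θ : Fin k → ℝ, Integrable (fun ω => exp (θ ⬝ᵥ W ω)) μ)
    (hWs_int : ∀ (i : Fin k) (θ : Fin k → ℝ), Integrable (fun ω => exp (θ ⬝ᵥ Ws i ω)) μ)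
    (hWi_int : ∀ (i : Fin k) (θ : Fin k → ℝ),
      Integrable (fun ω => W ω i * exp (θ ⬝ᵥ W ω)) μ)
    {u : Fin k → ℝ} (hu : ∀ i, 0 ≤ u i) (hB : 0 < K * norm2 u) {s : ℝ} (hs : 0 ≤ s) :
    mgf (fun ω => u ⬝ᵥ W ω) μ s
      ≤ exp ((u ⬝ᵥ μv) * (exp (s * (K * norm2 u)) - 1) / (K * norm2 u)) := by
  set A := u ⬝ᵥ μv
  set B := K * norm2 u
  have hW_int_u (r : ℝ) : Integrable (fun ω => exp (r * (u ⬝ᵥ W ω))) μ := by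
    simpa [smul_dotProduct] using hW_int (r • u)
  have hWs_int_u (i : Fin k) (r : ℝ) : Integrable (fun ω => exp (r * (u ⬝ᵥ Ws i ω))) μ := by
    simpa [smul_dotProduct] using hWs_int i (r • u)
  have hWi_int_u (i : Fin k) (r : ℝ) :
      Integrable (fun ω => W ω i * exp (r * (u ⬝ᵥ W ω))) μ := by
    simpa [smul_dotProduct] using hWi_int i (r • u)
  have hmgf (r : ℝ) : HasDerivAt (mgf (fun ω => u ⬝ᵥ W ω) μ)
      (∫ ω, (u ⬝ᵥ W ω) * exp (r * (u ⬝ᵥ W ω)) ∂μ) r := by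
    refine hasDerivAt_mgf ?_
    rw [show integrableExpSet _ μ = Set.univ from Set.eq_univ_of_forall hW_int_u, interior_univ]
    trivial
  have hrate (r : ℝ) : HasDerivAt (fun r => A * exp (r * B) / B) (A * exp (r * B)) r := by
    refine (((hasDerivAt_mul_const B).exp.const_mul A).div_const B).congr_deriv ?_
    field_simp
  have h := le_mul_exp_sub_of_hasDerivAt_le_mul hmgf hrate (fun r hr =>
    integral_dotProduct_mul_exp_le hsb hμv hK hu hr.le (hW_int_u r) (hWs_int_u · r) (hWi_int_u · r)) hs
  rw [mgf_zero, one_mul] at h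
  convert h using 2
  rw [zero_mul, exp_zero]
  ring

lemma measureReal_le_exp_neg_bernsteinRate [IsProbabilityMeasure μ] {μv : Fin k → ℝ}
    {Ws : Fin k → Ω → Fin k → ℝ} {K : ℝ}
    (hsb : ∀ i, IsSizeBiasedIn μ W i (μv i) (Ws i)) (hμv : ∀ i, 0 ≤ μv i)
    (hK : ∀ i, ∀ᵐ ω ∂μ, norm2 (fun j => W ω j - Ws i ω j) ≤ K)
    (hW_int : ∀ θ : Fin k → ℝ, Integrable (fun ω => exp (θ ⬝ᵥ W ω)) μ)
    (hWs_int : ∀ (i : Fin k) (θ : Fin k → ℝ), Integrable (fun ω => exp (θ ⬝ᵥ Ws i ω)) μ)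
    (hWi_int : ∀ (i : Fin k) (θ : Fin k → ℝ),
      Integrable (fun ω => W ω i * exp (θ ⬝ᵥ W ω)) μ)
    {u : Fin k → ℝ} (hu : ∀ i, 0 ≤ u i) (hA : 0 < u ⬝ᵥ μv) (hB : 0 < K * norm2 u)
    {a : ℝ} (ha : 0 ≤ a) :
    μ.real {ω | u ⬝ᵥ μv + a ≤ u ⬝ᵥ W ω}
      ≤ exp (-bernsteinRate (u ⬝ᵥ μv) (K * norm2 u) a) := by
  set A := u ⬝ᵥ μv
  set B := K * norm2 u
  set s := a / (A * B + B * a / 3)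
  have hs : 0 ≤ s := by positivity
  calc μ.real {ω | A + a ≤ u ⬝ᵥ W ω}
      ≤ exp (-s * (A + a)) * mgf (fun ω => u ⬝ᵥ W ω) μ s :=
        measure_ge_le_exp_mul_mgf _ hs (by simpa [smul_dotProduct] using hW_int (s • u))
    _ ≤ exp (-s * (A + a)) * exp (A * (exp (s * B) - 1) / B) := by
        gcongr
        exact mgf_dotProduct_le hsb hμv hK hW_int hWs_int hWi_int hu hB hs
    _ = exp (A * (exp (s * B) - 1) / B - s * (A + a)) := by
        rw [← exp_add]
        ring_nf
    _ ≤ exp (-bernsteinRate A B a) := exp_le_exp.2 (exponent_le_neg_bernsteinRate hA hB ha)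

end SizeBias

theorem size_bias_concentration_general
    {Ω : Type*} [MeasurableSpace Ω] (μ : Measure Ω) [IsProbabilityMeasure μ]
    {k : ℕ} (W : Ω → Fin k → ℝ) (Ws : Fin k → Ω → Fin k → ℝ)
    (μv : Fin k → ℝ) (hμpos : ∀ i, 0 < μv i)
    (σv : Fin k → ℝ)
    (hσpos : ∀ i, 0 < σv i)
    (σmin : ℝ) (hσmin : IsLeast (Set.range σv) σmin)
    (hsb : ∀ (i : Fin k) (f : (Fin k → ℝ) → ℝ),
      Integrable (fun ω => W ω i * f (W ω)) μ → Integrable (fun ω => f (Ws i ω)) μ →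
      ∫ ω, W ω i * f (W ω) ∂μ = μv i * ∫ ω, f (Ws i ω) ∂μ)
    (K : ℝ) (hKpos : 0 < K)
    (hK : ∀ i, ∀ᵐ ω ∂μ, norm2 (fun j => W ω j - Ws i ω j) ≤ K)
    (hint : ∀ θ : Fin k → ℝ, Integrable (fun ω => Real.exp (θ ⬝ᵥ W ω)) μ)
    (hint' : ∀ (i : Fin k) (θ : Fin k → ℝ),
      Integrable (fun ω => Real.exp (θ ⬝ᵥ Ws i ω)) μ)
    (hint'' : ∀ (i : Fin k) (θ : Fin k → ℝ),
      Integrable (fun ω => W ω i * Real.exp (θ ⬝ᵥ W ω)) μ)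
    (t : Fin k → ℝ) (ht : ∀ i, 0 ≤ t i) :
    μ {ω | ∀ i, t i ≤ (W ω i - μv i) / σv i}
      ≤ ENNReal.ofReal (Real.exp (-(norm2 t ^ 2 /
          (2 * ((2 * K / σmin) * norm2 (fun i => μv i / σv i)
            + (K / (2 * σmin)) * norm2 t))))) := by
  obtain ⟨⟨j₀, rfl⟩, hσmin_le⟩ := hσmin
  rcases (norm2_nonneg t).eq_or_lt with ht0 | ht_pos
  · simp [← ht0, prob_le_one]
  obtain ⟨j, hj⟩ := norm2_pos_iff.1 ht_pos
  set u : Fin k → ℝ := fun i => t i / σv i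
  have hu (i : Fin k) : 0 ≤ u i := div_nonneg (ht i) (hσpos i).le
  have hA : 0 < u ⬝ᵥ μv := Finset.sum_pos' (fun i _ => mul_nonneg (hu i) (hμpos i).le)
    ⟨j, Finset.mem_univ j, mul_pos (div_pos ((ht j).lt_of_ne' hj) (hσpos j)) (hμpos j)⟩
  have hB : 0 < K * norm2 u :=
    mul_pos hKpos (norm2_pos_iff.2 ⟨j, div_ne_zero hj (hσpos j).ne'⟩)
  have hu_le : K * norm2 u ≤ K * (norm2 t / σv j₀) :=
    mul_le_mul_of_nonneg_left (norm2_div_le (hσpos j₀) fun i => hσmin_le ⟨i, rfl⟩) hKpos.le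
  have hA_le : u ⬝ᵥ μv ≤ norm2 t * norm2 (fun i => μv i / σv i) := by
    convert dotProduct_le_norm2_mul_norm2 t (fun i => μv i / σv i) using 1
    exact Finset.sum_congr rfl fun i _ => (div_mul_eq_mul_div₀ _ _ _).trans (mul_div_assoc _ _ _)
  have hrate := div_le_bernsteinRate (K₁ := 2 * K / σv j₀ * norm2 (fun i => μv i / σv i))
    (K₂ := K / (2 * σv j₀)) hA.le hB ht_pos
    ((mul_le_mul hA_le hu_le hB.le (mul_nonneg (norm2_nonneg _) (norm2_nonneg _))).trans_eq
      (by ring))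
    (hu_le.trans_eq (by field_simp))
  calc μ {ω | ∀ i, t i ≤ (W ω i - μv i) / σv i}
      ≤ μ {ω | u ⬝ᵥ μv + norm2 t ^ 2 ≤ u ⬝ᵥ W ω} :=
        measure_mono fun ω hω => dotProduct_add_sq_norm2_le ht hσpos hω
    _ ≤ ENNReal.ofReal (Real.exp (-bernsteinRate (u ⬝ᵥ μv) (K * norm2 u) (norm2 t ^ 2))) :=
        (ENNReal.le_ofReal_iff_toReal_le (measure_ne_top _ _) (Real.exp_pos _).le).2
          (measureReal_le_exp_neg_bernsteinRate hsb (fun i => (hμpos i).le) hK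
            hint hint' hint'' hu hA hB (sq_nonneg _))
    _ ≤ _ := ENNReal.ofReal_le_ofReal (Real.exp_le_exp.2 (neg_le_neg hrate))

/-- Multivariate concentration via bounded size bias couplings: if `W` has nonnegative
coordinates, mean `μ ≻ 0`, standard deviations `σ ≻ 0`, and `‖W - W^i‖₂ ≤ K` a.s. for
each direction-`i` size biased vector `W^i`, then with `σ_(1) = min_i σ_i`,
`K₁ = (2K/σ_(1))‖μ/σ‖₂`, `K₂ = K/(2σ_(1))`, for every `t ⪰ 0`,
`P((W - μ)/σ ⪰ t) ≤ exp(-‖t‖₂²/(2(K₁ + K₂‖t‖₂)))`. -/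
theorem size_bias_concentration
    {Ω : Type*} [MeasurableSpace Ω] (μ : Measure Ω) [IsProbabilityMeasure μ]
    {k : ℕ} (W : Ω → Fin k → ℝ) (Ws : Fin k → Ω → Fin k → ℝ)
    (hpos : ∀ ω i, 0 ≤ W ω i)
    (μv : Fin k → ℝ) (hμv : ∀ i, μv i = ∫ ω, W ω i ∂μ) (hμpos : ∀ i, 0 < μv i)
    (σv : Fin k → ℝ) (hσv : ∀ i, σv i ^ 2 = ∫ ω, (W ω i - μv i) ^ 2 ∂μ)
    (hσpos : ∀ i, 0 < σv i)
    (σmin : ℝ) (hσmin : IsLeast (Set.range σv) σmin)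
    (hsb : ∀ (i : Fin k) (f : (Fin k → ℝ) → ℝ),
      Integrable (fun ω => W ω i * f (W ω)) μ → Integrable (fun ω => f (Ws i ω)) μ →
      ∫ ω, W ω i * f (W ω) ∂μ = μv i * ∫ ω, f (Ws i ω) ∂μ)
    (K : ℝ) (hKpos : 0 < K)
    (hK : ∀ i, ∀ᵐ ω ∂μ, norm2 (fun j => W ω j - Ws i ω j) ≤ K)
    (hint : ∀ θ : Fin k → ℝ, Integrable (fun ω => Real.exp (θ ⬝ᵥ W ω)) μ)
    (hint' : ∀ (i : Fin k) (θ : Fin k → ℝ),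
      Integrable (fun ω => Real.exp (θ ⬝ᵥ Ws i ω)) μ)
    (hint'' : ∀ (i : Fin k) (θ : Fin k → ℝ),
      Integrable (fun ω => W ω i * Real.exp (θ ⬝ᵥ W ω)) μ)
    (t : Fin k → ℝ) (ht : ∀ i, 0 ≤ t i) :
    μ {ω | ∀ i, t i ≤ (W ω i - μv i) / σv i}
      ≤ ENNReal.ofReal (Real.exp (-(norm2 t ^ 2 /
          (2 * ((2 * K / σmin) * norm2 (fun i => μv i / σv i)
            + (K / (2 * σmin)) * norm2 t))))) :=
  size_bias_concentration_general μ W Ws μv hμpos σv hσpos σmin hσmin hsb K hKpos hK hint hint'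
    hint'' t ht
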